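/- arXiv:1111.0545 — 2 statements merged into one kernel-verified Lean document; each statement's English description precedes it below -/
import Mathlib

section
/- With f = X(X−1)(X−α₁)(X−α₂)(X−α₃) ∈ 𝔽_p[X] and c_k the coefficient of X^k in f^{(p−1)/2}, one has ∑_{(α,β) ∈ 𝔽_p × 𝔽_p} ( f(α)·f(β) )^{(p−1)/2} = 2·c_{p−1}·c_{2p−2} + c_{p−1}² + c_{2p−2}². -/
/-!
The double sum is the square of `∑ₓ f(x)^s` with `s = (p - 1) / 2`. Over a field with `q`
elements the power sum `∑ₓ xⁱ` is `-1` when `i` is a positive multiple of `q - 1` and `0`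
otherwise, and `f^s` has degree `5s < 3(p - 1)`, so `∑ₓ f(x)^s = -(c_{p-1} + c_{2p-2})`.
-/

open Polynomial Finset

namespace FiniteField

variable {K : Type*} [Field K] [Fintype K]

theorem sum_pow_of_ne_zero {i : ℕ} (hi : i ≠ 0) :
    ∑ x : K, x ^ i = if Fintype.card K - 1 ∣ i then -1 else 0 := by
  classical
  rw [← sum_pow_units K i]
  refine (Fintype.sum_of_injective Units.val Units.val_injective _ _ (fun x hx ↦ ?_)
    fun _ ↦ rfl).symm
  obtain rfl : x = 0 := by_contra fun h ↦ hx ⟨Units.mk0 x h, rfl⟩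
  exact zero_pow hi

theorem sum_eval_of_natDegree_lt {g : K[X]} (hg : g.natDegree < 3 * (Fintype.card K - 1)) :
    ∑ x : K, g.eval x =
      -(g.coeff (Fintype.card K - 1) + g.coeff (2 * (Fintype.card K - 1))) := by
  set m := Fintype.card K - 1
  have hm : 0 < m := Nat.sub_pos_of_lt Fintype.one_lt_card
  have hpow (k : ℕ) (hk : 0 < k) : ∑ x : K, x ^ (k * m) = -1 := by
    rw [sum_pow_of_ne_zero (by positivity), if_pos (dvd_mul_left m k)]
  calc ∑ x : K, g.eval x = ∑ i ∈ range (3 * m), g.coeff i * ∑ x : K, x ^ i := by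
        simp_rw [eval_eq_sum_range' hg, mul_sum]
        exact sum_comm
    _ = g.coeff m * ∑ x : K, x ^ (1 * m) + g.coeff (2 * m) * ∑ x : K, x ^ (2 * m) := by
        rw [one_mul]
        refine sum_eq_add_of_mem _ _ (mem_range.2 (by omega)) (mem_range.2 (by omega))
          (by omega) ?_
        rintro i hi ⟨him, hi2m⟩
        rcases eq_or_ne i 0 with rfl | hi0
        · simp
        rw [sum_pow_of_ne_zero hi0, if_neg, mul_zero]
        rintro ⟨k, rfl⟩
        have : k < 3 := by rw [mem_range] at hi; nlinarith
        interval_cases k <;> omega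
    _ = -(g.coeff m + g.coeff (2 * m)) := by rw [hpow 1 one_pos, hpow 2 two_pos]; ring

end FiniteField

theorem sum_ff_pow_eq_general (p : ℕ) [Fact p.Prime]
    (α₁ α₂ α₃ : ZMod p)
    (f : Polynomial (ZMod p))
    (hf : f = X * (X - 1) * (X - C α₁) * (X - C α₂) * (X - C α₃))
    (c : ℕ → ZMod p) (hc : ∀ k, c k = (f ^ ((p - 1) / 2)).coeff k) :
    ∑ z : ZMod p × ZMod p, (f.eval z.1 * f.eval z.2) ^ ((p - 1) / 2) =
      2 * c (p - 1) * c (2 * p - 2) + c (p - 1) ^ 2 + c (2 * p - 2) ^ 2 := by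
  set s := (p - 1) / 2
  have hp : 2 ≤ p := (Fact.out : p.Prime).two_le
  have hdeg_f : f.natDegree = 5 := by
    rw [hf]
    compute_degree!
  have hdeg : (f ^ s).natDegree < 3 * (Fintype.card (ZMod p) - 1) := by
    rw [natDegree_pow, hdeg_f, ZMod.card]
    omega
  have hsum := FiniteField.sum_eval_of_natDegree_lt hdeg
  simp only [ZMod.card, eval_pow] at hsum
  calc ∑ z : ZMod p × ZMod p, (f.eval z.1 * f.eval z.2) ^ s
      = (∑ x : ZMod p, f.eval x ^ s) ^ 2 := by
        simp_rw [sq, Fintype.sum_mul_sum, Fintype.sum_prod_type, mul_pow]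
    _ = _ := by
        rw [hsum, hc, hc, show 2 * p - 2 = 2 * (p - 1) by omega]
        ring

/-- For the quintic `f = X(X-1)(X-α₁)(X-α₂)(X-α₃)` over `𝔽_p`, one has
`∑_{(α,β) ∈ 𝔽_p × 𝔽_p} (f(α)·f(β))^((p-1)/2) = 2 c_{p-1} c_{2p-2} + c_{p-1}² + c_{2p-2}²`. -/
theorem sum_ff_pow_eq (p : ℕ) [Fact p.Prime] (hp : 5 ≤ p)
    (α₁ α₂ α₃ : ZMod p)
    (h12 : α₁ ≠ α₂) (h13 : α₁ ≠ α₃) (h23 : α₂ ≠ α₃)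
    (h10 : α₁ ≠ 0) (h20 : α₂ ≠ 0) (h30 : α₃ ≠ 0)
    (h11 : α₁ ≠ 1) (h21 : α₂ ≠ 1) (h31 : α₃ ≠ 1)
    (f : Polynomial (ZMod p))
    (hf : f = X * (X - 1) * (X - C α₁) * (X - C α₂) * (X - C α₃))
    (c : ℕ → ZMod p) (hc : ∀ k, c k = (f ^ ((p - 1) / 2)).coeff k) :
    ∑ z : ZMod p × ZMod p, (f.eval z.1 * f.eval z.2) ^ ((p - 1) / 2) =
      2 * c (p - 1) * c (2 * p - 2) + c (p - 1) ^ 2 + c (2 * p - 2) ^ 2 :=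
  sum_ff_pow_eq_general p α₁ α₂ α₃ f hf c hc
end

section
/- With f = X(X−1)(X−α₁)(X−α₂)(X−α₃) ∈ 𝔽_p[X] and c_k the coefficient of X^k in f^{(p−1)/2}, one has ∑_{(a,b) ∈ 𝔽_p × 𝔽_p} ( a·(1+b+a)·∏_{i=1}^{3}(α_i² + α_i·b + a) )^{(p−1)/2} = c_{p−1}·c_{2p−2} − c_{p−2}·c_{2p−1}. -/
/-!
Put `m = (p - 1) / 2` and `g = f ^ m`, so `c k = g.coeff k`. The summand at
`(a, b)` is `(∏ r, (r ^ 2 + b r + a)) ^ m` over the roots `r ∈ {0, 1, α₁, α₂, α₃}` of `f`; hence if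
`X ^ 2 + b X + a = (X - s) (X - t)` in `𝔽_{p²}`, it equals `g(s) g(t)`.

For each `(a, b) ∈ 𝔽_p²` count the ordered pairs `(s, t) ∈ 𝔽_p²` with `(s t, -(s + t)) = (a, b)`
plus the `x ∈ 𝔽_{p²}` with `(N x, -Tr x) = (a, b)`, i.e. `(X - x) (X - x ^ p) = X ^ 2 + b X + a`:
this is `2 + 0` if `X ^ 2 + b X + a` has two distinct roots in `𝔽_p`, `1 + 1` if it has a double
root, and `0 + 2` if it is irreducible. Therefore
`2 ∑ summand = (∑_{s ∈ 𝔽_p} g(s)) ^ 2 + ∑_{x ∈ 𝔽_{p²}} g(x) g(x ^ p)`.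
Both sums follow from `∑_{x ∈ 𝔽_q} x ^ k = -[k ≠ 0 ∧ q - 1 ∣ k]`: since `deg g = 5m`, the first
is `-(c_{2m} + c_{4m})` and in the second only the exponents `j + p k ∈ {p² - 1, 2 (p² - 1)}`
survive, giving `-(c_{2m}² + 2 c_{2m-1} c_{4m+1} + c_{4m}²)`.
-/

open Polynomial Finset

theorem mul_eq_mul_and_add_eq_add_iff {L : Type*} [CommRing L] [IsDomain L] {s t u v : L} :
    u * v = s * t ∧ u + v = s + t ↔ u = s ∧ v = t ∨ u = t ∧ v = s := by
  constructor
  · rintro ⟨hmul, hadd⟩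
    have : (u - s) * (u - t) = 0 := by linear_combination u * hadd - hmul
    rcases mul_eq_zero.mp this with hu | hu
    · exact .inl ⟨by linear_combination hu, by linear_combination hadd - hu⟩
    · exact .inr ⟨by linear_combination hu, by linear_combination hadd - hu⟩
  · rintro (⟨rfl, rfl⟩ | ⟨rfl, rfl⟩) <;> constructor <;> ring

theorem mul_neg_add_eq_iff {F K : Type*} [Field F] [Field K] [Algebra F K] {a b : F} {s t : K}
    (hmul : s * t = algebraMap F K a) (hadd : s + t = -algebraMap F K b) (z : F × F) :
    (z.1 * z.2, -(z.1 + z.2)) = (a, b) ↔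
      algebraMap F K z.1 = s ∧ algebraMap F K z.2 = t ∨
        algebraMap F K z.1 = t ∧ algebraMap F K z.2 = s := by
  have hι := (algebraMap F K).injective
  rw [← mul_eq_mul_and_add_eq_add_iff, hmul, hadd, ← map_mul, ← map_add, ← map_neg, hι.eq_iff,
    hι.eq_iff, Prod.mk.injEq, neg_eq_iff_eq_neg]

theorem filter_range_dvd_eq {m : ℕ} (hm : 1 ≤ m) :
    {k ∈ range (5 * m + 1) | k ≠ 0 ∧ 2 * m ∣ k} = {2 * m, 4 * m} := by
  ext k
  simp only [mem_filter, mem_range, mem_insert, mem_singleton]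
  constructor
  · rintro ⟨hk, hk0, d, rfl⟩
    have : d < 3 := by nlinarith
    interval_cases d <;> omega
  · rintro (rfl | rfl)
    · exact ⟨by omega, by omega, dvd_rfl⟩
    · exact ⟨by omega, by omega, 2, by ring⟩

theorem exponents_of_sq_sub_one_dvd {m j k : ℕ} (hm : 1 ≤ m) (hj : j ≤ 5 * m) (hk : k ≤ 5 * m)
    (h0 : j + (2 * m + 1) * k ≠ 0) (hd : (2 * m + 1) ^ 2 - 1 ∣ j + (2 * m + 1) * k) :
    (j = 2 * m ∧ k = 2 * m) ∨ (j = 4 * m + 1 ∧ k = 2 * m - 1) ∨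
      (j = 2 * m - 1 ∧ k = 4 * m + 1) ∨ (j = 4 * m ∧ k = 4 * m) := by
  obtain ⟨d, hd⟩ := hd
  rw [show (2 * m + 1) ^ 2 - 1 = 4 * m * (m + 1) by ring_nf; omega] at hd
  have hd2 : d < 3 := by
    by_contra! h
    nlinarith [Nat.mul_le_mul_left (4 * m * (m + 1)) h, Nat.mul_le_mul_left (2 * m + 1) hk]
  interval_cases d
  · exact absurd (hd.trans (mul_zero _)) h0
  · have : k ≤ 2 * m := by
      by_contra! h
      nlinarith [Nat.mul_le_mul_left (2 * m + 1) h]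
    have : 2 * m ≤ k + 1 := by
      by_contra! h
      nlinarith [Nat.mul_le_mul_left (2 * m + 1) h]
    obtain hk | rfl : k + 1 = 2 * m ∨ k = 2 * m := by omega
    · right; left
      refine ⟨?_, by omega⟩
      nlinarith
    · left
      exact ⟨by nlinarith, rfl⟩
  · have : k ≤ 4 * m + 1 := by
      by_contra! h
      nlinarith [Nat.mul_le_mul_left (2 * m + 1) h]
    have : 4 * m ≤ k := by
      by_contra! h
      nlinarith [Nat.mul_le_mul_left (2 * m + 1) h]
    obtain rfl | rfl : k = 4 * m ∨ k = 4 * m + 1 := by omega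
    · right; right; right
      exact ⟨by nlinarith, rfl⟩
    · right; right; left
      refine ⟨?_, rfl⟩
      zify [show 1 ≤ 2 * m by omega] at hd ⊢
      linarith

theorem filter_range_product_eq {m : ℕ} (hm : 1 ≤ m) :
    {jk ∈ range (5 * m + 1) ×ˢ range (5 * m + 1) |
        jk.1 + (2 * m + 1) * jk.2 ≠ 0 ∧ (2 * m + 1) ^ 2 - 1 ∣ jk.1 + (2 * m + 1) * jk.2} =
      {(2 * m, 2 * m), (4 * m + 1, 2 * m - 1), (2 * m - 1, 4 * m + 1), (4 * m, 4 * m)} := by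
  ext ⟨j, k⟩
  simp only [mem_filter, mem_product, mem_range, mem_insert, mem_singleton, Prod.mk.injEq]
  constructor
  · rintro ⟨⟨hj, hk⟩, h0, hd⟩
    exact exponents_of_sq_sub_one_dvd hm (by omega) (by omega) h0 hd
  · obtain ⟨n, rfl⟩ := Nat.exists_eq_add_of_le' hm
    rintro (⟨rfl, rfl⟩ | ⟨rfl, rfl⟩ | ⟨rfl, rfl⟩ | ⟨rfl, rfl⟩) <;>
      refine ⟨⟨by omega, by omega⟩, by positivity, ?_⟩
    · exact ⟨1, by ring_nf; omega⟩
    · exact ⟨1, by rw [show 2 * (n + 1) - 1 = 2 * n + 1 by omega]; ring_nf; omega⟩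
    · exact ⟨2, by rw [show 2 * (n + 1) - 1 = 2 * n + 1 by omega]; ring_nf; omega⟩
    · exact ⟨2, by ring_nf; omega⟩

namespace FiniteField

section PowerSums

variable {K : Type*} [Field K] [Fintype K]

theorem sum_pow (k : ℕ) :
    ∑ x : K, x ^ k = if k ≠ 0 ∧ Fintype.card K - 1 ∣ k then -1 else 0 := by
  classical
  rcases eq_or_ne k 0 with rfl | hk
  · simp
  rw [if_congr (and_iff_right hk) rfl rfl, ← sum_pow_units]
  refine (Fintype.sum_of_injective _ Units.val_injective _ _ (fun x hx => ?_) fun _ => rfl).symm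
  obtain rfl : x = 0 := by_contra fun h => hx ⟨Units.mk0 x h, rfl⟩
  exact zero_pow hk

theorem sum_sum_mul_pow {ι : Type*} (s : Finset ι) (w : ι → K) (e : ι → ℕ) :
    ∑ x : K, ∑ i ∈ s, w i * x ^ e i =
      -∑ i ∈ s with e i ≠ 0 ∧ Fintype.card K - 1 ∣ e i, w i := by
  rw [sum_comm, sum_filter, ← sum_neg_distrib]
  refine sum_congr rfl fun i _ => ?_
  rw [← mul_sum, sum_pow]
  split_ifs <;> simp

theorem sum_eval_eq_neg_sum_coeff (Q : K[X]) {N : ℕ} (hN : Q.natDegree < N) :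
    ∑ x : K, Q.eval x = -∑ k ∈ range N with k ≠ 0 ∧ Fintype.card K - 1 ∣ k, Q.coeff k := by
  simp_rw [eval_eq_sum_range' hN]
  exact sum_sum_mul_pow _ _ id

theorem sum_eval_mul_eval_pow_eq_neg_sum_coeff (Q : K[X]) {N : ℕ} (hN : Q.natDegree < N)
    (r : ℕ) :
    ∑ x : K, Q.eval x * Q.eval (x ^ r) =
      -∑ jk ∈ range N ×ˢ range N with
          jk.1 + r * jk.2 ≠ 0 ∧ Fintype.card K - 1 ∣ jk.1 + r * jk.2,
        Q.coeff jk.1 * Q.coeff jk.2 := by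
  have (x : K) : Q.eval x * Q.eval (x ^ r) =
      ∑ jk ∈ range N ×ˢ range N, Q.coeff jk.1 * Q.coeff jk.2 * x ^ (jk.1 + r * jk.2) := by
    rw [eval_eq_sum_range' hN, eval_eq_sum_range' hN, sum_mul_sum, sum_product]
    refine sum_congr rfl fun j _ => sum_congr rfl fun k _ => ?_
    ring
  simp_rw [this]
  exact sum_sum_mul_pow _ _ _

theorem sum_eval_of_card_eq {m : ℕ} (hm : 1 ≤ m) (hK : Fintype.card K = 2 * m + 1) (Q : K[X])
    (hQ : Q.natDegree ≤ 5 * m) :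
    ∑ x : K, Q.eval x = -(Q.coeff (2 * m) + Q.coeff (4 * m)) := by
  rw [sum_eval_eq_neg_sum_coeff Q (Nat.lt_succ_of_le hQ), hK, Nat.add_sub_cancel,
    filter_range_dvd_eq hm, sum_pair (by omega)]

theorem sum_eval_mul_eval_pow_of_card_eq {m : ℕ} (hm : 1 ≤ m)
    (hK : Fintype.card K = (2 * m + 1) ^ 2) (Q : K[X]) (hQ : Q.natDegree ≤ 5 * m) :
    ∑ x : K, Q.eval x * Q.eval (x ^ (2 * m + 1)) =
      -(Q.coeff (2 * m) ^ 2 + 2 * (Q.coeff (2 * m - 1) * Q.coeff (4 * m + 1)) +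
        Q.coeff (4 * m) ^ 2) := by
  rw [sum_eval_mul_eval_pow_eq_neg_sum_coeff Q (Nat.lt_succ_of_le hQ), hK,
    filter_range_product_eq hm, sum_insert (by simp; omega), sum_insert (by simp; omega),
    sum_insert (by simp), sum_singleton]
  ring

end PowerSums

section QuadraticExtension

variable {F K : Type*} [Field F] [Fintype F] [Field K] [Fintype K] [Algebra F K]

theorem algebraMap_norm_eq_mul_pow_card (h2 : Module.finrank F K = 2) (x : K) :
    algebraMap F K (Algebra.norm F x) = x * x ^ Fintype.card F := by
  simp [algebraMap_norm_eq_prod_pow, h2, prod_range_succ, Nat.card_eq_fintype_card]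

theorem algebraMap_trace_eq_add_pow_card (h2 : Module.finrank F K = 2) (x : K) :
    algebraMap F K (Algebra.trace F K x) = x + x ^ Fintype.card F := by
  simp [algebraMap_trace_eq_sum_pow, h2, sum_range_succ, Nat.card_eq_fintype_card]

theorem mem_range_algebraMap_iff_pow_card_eq (x : K) :
    x ∈ Set.range (algebraMap F K) ↔ x ^ Fintype.card F = x := by
  refine ⟨by rintro ⟨u, rfl⟩; rw [← map_pow, pow_card], fun hx => ?_⟩
  rw [IsGalois.mem_range_algebraMap_iff_fixed]
  intro σ
  obtain ⟨n, rfl⟩ := (bijective_frobeniusAlgEquivOfAlgebraic_pow F K).2 σ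
  rw [AlgEquiv.coe_pow]
  exact Function.iterate_fixed hx _

theorem exists_mul_eq_add_eq (h2 : Module.finrank F K = 2) (hF : ringChar F ≠ 2) (a b : F) :
    ∃ s t : K, s * t = algebraMap F K a ∧ s + t = algebraMap F K b := by
  -- the discriminant is a norm `y ^ (q + 1)`, hence a square in `K` as `q` is odd
  obtain ⟨y, hy⟩ := norm_surjective F K (b ^ 2 - 4 * a)
  have hq := odd_card_of_char_ne_two hF
  set δ := y ^ ((Fintype.card F + 1) / 2)
  have hδ : δ ^ 2 = algebraMap F K (b ^ 2 - 4 * a) := by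
    rw [← hy, algebraMap_norm_eq_mul_pow_card h2, ← pow_succ', ← pow_mul]
    congr 1
    omega
  have h2K : (2 : K) ≠ 0 := by
    simpa only [map_ofNat, map_zero] using (algebraMap F K).injective.ne (Ring.two_ne_zero hF)
  refine ⟨(algebraMap F K b + δ) / 2, (algebraMap F K b - δ) / 2, ?_, ?_⟩
  · field_simp
    simp only [map_sub, map_mul, map_pow, map_ofNat] at hδ
    linear_combination -hδ
  · field_simp
    ring

theorem norm_neg_trace_eq_iff (h2 : Module.finrank F K = 2) {a b : F} {s t : K}
    (hmul : s * t = algebraMap F K a) (hadd : s + t = -algebraMap F K b) (x : K) :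
    (Algebra.norm F x, -Algebra.trace F K x) = (a, b) ↔
      x = s ∧ x ^ Fintype.card F = t ∨ x = t ∧ x ^ Fintype.card F = s := by
  have hι := (algebraMap F K).injective
  rw [← mul_eq_mul_and_add_eq_add_iff, hmul, hadd, Prod.mk.injEq, neg_eq_iff_eq_neg,
    ← hι.eq_iff, ← hι.eq_iff (a := Algebra.trace F K x), algebraMap_norm_eq_mul_pow_card h2,
    algebraMap_trace_eq_add_pow_card h2, map_neg]

theorem card_quadratic_fibers_of_splits [DecidableEq F] (h2 : Module.finrank F K = 2) (u v : F) :
    #{z : F × F | (z.1 * z.2, -(z.1 + z.2)) = (u * v, -(u + v))} +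
      #{x : K | (Algebra.norm F x, -Algebra.trace F K x) = (u * v, -(u + v))} = 2 := by
  have hι := (algebraMap F K).injective
  have hmul : algebraMap F K u * algebraMap F K v = algebraMap F K (u * v) := (map_mul ..).symm
  have hadd : algebraMap F K u + algebraMap F K v = -algebraMap F K (-(u + v)) := by
    rw [map_neg, neg_neg, map_add]
  have hfix (w : F) : algebraMap F K w ^ Fintype.card F = algebraMap F K w := by
    rw [← map_pow, pow_card]
  rcases eq_or_ne u v with rfl | huv
  · have hF : ({z : F × F | (z.1 * z.2, -(z.1 + z.2)) = (u * u, -(u + u))} : Finset _) =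
        {(u, u)} := by
      ext z
      simp only [mem_filter, mem_univ, true_and, mul_neg_add_eq_iff hmul hadd]
      simp [hι.eq_iff, Prod.ext_iff]
    have hK : ({x : K | (Algebra.norm F x, -Algebra.trace F K x) = (u * u, -(u + u))} :
        Finset _) = {algebraMap F K u} := by
      ext x
      simp only [mem_filter, mem_univ, true_and, norm_neg_trace_eq_iff h2 hmul hadd, or_self,
        mem_singleton]
      exact ⟨And.left, fun hx => ⟨hx, hx ▸ hfix u⟩⟩
    rw [hF, hK, card_singleton, card_singleton]
  · have hF : ({z : F × F | (z.1 * z.2, -(z.1 + z.2)) = (u * v, -(u + v))} : Finset _) =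
        {(u, v), (v, u)} := by
      ext z
      simp only [mem_filter, mem_univ, true_and, mul_neg_add_eq_iff hmul hadd]
      simp [hι.eq_iff, Prod.ext_iff]
    have hK : ({x : K | (Algebra.norm F x, -Algebra.trace F K x) = (u * v, -(u + v))} :
        Finset _) = ∅ := by
      ext x
      simp only [mem_filter, mem_univ, true_and, norm_neg_trace_eq_iff h2 hmul hadd,
        notMem_empty, iff_false]
      rintro (⟨rfl, h⟩ | ⟨rfl, h⟩)
      · exact huv (hι (hfix u ▸ h))
      · exact huv (hι (hfix v ▸ h)).symm
    rw [hF, hK, card_pair (by simp [huv]), card_empty]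

theorem card_quadratic_fibers_of_notMem_range [DecidableEq F] (h2 : Module.finrank F K = 2)
    {a b : F} {s t : K} (hmul : s * t = algebraMap F K a) (hadd : s + t = -algebraMap F K b)
    (hs : s ∉ Set.range (algebraMap F K)) :
    #{z : F × F | (z.1 * z.2, -(z.1 + z.2)) = (a, b)} +
      #{x : K | (Algebra.norm F x, -Algebra.trace F K x) = (a, b)} = 2 := by
  classical
  set ι := algebraMap F K
  set q := Fintype.card F
  have ht : t ∉ Set.range ι := fun ⟨v, hv⟩ =>
    hs ⟨-b - v, by rw [map_sub, hv, map_neg, ← hadd]; ring⟩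
  obtain ⟨hs', ht'⟩ : s ^ q = t ∧ t ^ q = s := by
    let σ := frobeniusAlgHom F K
    refine ((mul_eq_mul_and_add_eq_add_iff.1 ⟨?_, ?_⟩).resolve_left fun h =>
      hs ((mem_range_algebraMap_iff_pow_card_eq s).2 h.1) : σ s = t ∧ σ t = s)
    · rw [← map_mul, hmul, AlgHom.commutes]
    · rw [← map_add, hadd, map_neg, AlgHom.commutes]
  have hst : s ≠ t := fun h => hs ((mem_range_algebraMap_iff_pow_card_eq s).2 (h ▸ hs'))
  have hF : ({z : F × F | (z.1 * z.2, -(z.1 + z.2)) = (a, b)} : Finset _) = ∅ := by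
    ext z
    simp only [mem_filter, mem_univ, true_and, mul_neg_add_eq_iff hmul hadd, notMem_empty,
      iff_false]
    rintro (⟨h, -⟩ | ⟨h, -⟩)
    · exact hs ⟨_, h⟩
    · exact ht ⟨_, h⟩
  have hK : ({x : K | (Algebra.norm F x, -Algebra.trace F K x) = (a, b)} : Finset _) = {s, t} := by
    ext x
    simp only [mem_filter, mem_univ, true_and, norm_neg_trace_eq_iff h2 hmul hadd, mem_insert,
      mem_singleton]
    constructor
    · rintro (⟨rfl, -⟩ | ⟨rfl, -⟩)
      · exact .inl rfl
      · exact .inr rfl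
    · rintro (rfl | rfl)
      · exact .inl ⟨rfl, hs'⟩
      · exact .inr ⟨rfl, ht'⟩
  rw [hF, hK, card_empty, card_pair hst]

theorem card_quadratic_fibers [DecidableEq F] (h2 : Module.finrank F K = 2)
    (hF : ringChar F ≠ 2) (w : F × F) :
    #{z : F × F | (z.1 * z.2, -(z.1 + z.2)) = w} +
      #{x : K | (Algebra.norm F x, -Algebra.trace F K x) = w} = 2 := by
  obtain ⟨a, b⟩ := w
  obtain ⟨s, t, hmul, hadd⟩ := exists_mul_eq_add_eq (K := K) h2 hF a (-b)
  rw [map_neg] at hadd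
  by_cases hs : s ∈ Set.range (algebraMap F K)
  · obtain ⟨u, rfl⟩ := hs
    obtain ⟨v, rfl⟩ : t ∈ Set.range (algebraMap F K) :=
      ⟨-b - u, by rw [map_sub, map_neg, ← hadd]; ring⟩
    obtain ⟨rfl, rfl⟩ : u * v = a ∧ -(u + v) = b := by
      rw [← Prod.mk.injEq, mul_neg_add_eq_iff hmul hadd (u, v)]
      exact .inl ⟨rfl, rfl⟩
    exact card_quadratic_fibers_of_splits h2 u v
  · exact card_quadratic_fibers_of_notMem_range h2 hmul hadd hs

theorem sum_mul_neg_add_add_sum_norm_neg_trace {M : Type*} [AddCommMonoid M]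
    (h2 : Module.finrank F K = 2) (hF : ringChar F ≠ 2) (H : F × F → M) :
    ∑ z : F × F, H (z.1 * z.2, -(z.1 + z.2)) +
      ∑ x : K, H (Algebra.norm F x, -Algebra.trace F K x) = 2 • ∑ w, H w := by
  classical
  rw [← sum_fiberwise' univ (fun z : F × F => (z.1 * z.2, -(z.1 + z.2))) H,
    ← sum_fiberwise' univ (fun x : K => (Algebra.norm F x, -Algebra.trace F K x)) H,
    ← sum_add_distrib, smul_sum]
  refine sum_congr rfl fun w _ => ?_
  rw [sum_const, sum_const, ← add_nsmul, card_quadratic_fibers h2 hF]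

theorem sum_eq_coeff_mul_coeff_sub_coeff_mul_coeff {m : ℕ} (hF : Fintype.card F = 2 * m + 1) (h2 : Module.finrank F K = 2) (g : F[X])
    (hg : g.natDegree ≤ 5 * m) (H : F × F → F)
    (hH : ∀ (w : F × F) (s t : K), algebraMap F K w.1 = s * t → algebraMap F K w.2 = -(s + t) →
      algebraMap F K (H w) = (g.map (algebraMap F K)).eval s * (g.map (algebraMap F K)).eval t) :
    ∑ w, H w = g.coeff (2 * m) * g.coeff (4 * m) - g.coeff (2 * m - 1) * g.coeff (4 * m + 1) := by
  set ι := algebraMap F K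
  have hm : 1 ≤ m := by have := Fintype.one_lt_card (α := F); omega
  have hchar : ringChar F ≠ 2 := fun h => by have := even_card_of_char_two h; omega
  have hK : Fintype.card K = (2 * m + 1) ^ 2 := by
    rw [Module.card_eq_pow_finrank (K := F), hF, h2]
  have hsumF : ∑ z : F × F, H (z.1 * z.2, -(z.1 + z.2)) =
      (g.coeff (2 * m) + g.coeff (4 * m)) ^ 2 := by
    have (z : F × F) : H (z.1 * z.2, -(z.1 + z.2)) = g.eval z.1 * g.eval z.2 := ι.injective <| by
      rw [hH _ (ι z.1) (ι z.2) (map_mul ..) (by rw [map_neg, map_add]), map_mul, eval_map,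
        eval_map, eval₂_at_apply, eval₂_at_apply]
    simp_rw [this, Fintype.sum_prod_type, ← sum_mul_sum, sum_eval_of_card_eq hm hF g hg]
    ring
  have hsumK : ∑ x : K, H (Algebra.norm F x, -Algebra.trace F K x) =
      -(g.coeff (2 * m) ^ 2 + 2 * (g.coeff (2 * m - 1) * g.coeff (4 * m + 1)) +
        g.coeff (4 * m) ^ 2) := by
    apply ι.injective
    have (x : K) : ι (H (Algebra.norm F x, -Algebra.trace F K x)) =
        (g.map ι).eval x * (g.map ι).eval (x ^ (2 * m + 1)) :=
      hH _ _ _ (by rw [algebraMap_norm_eq_mul_pow_card h2, hF])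
        (by rw [map_neg, algebraMap_trace_eq_add_pow_card h2, hF])
    rw [map_sum, sum_congr rfl fun x _ => this x,
      sum_eval_mul_eval_pow_of_card_eq hm hK _ (natDegree_map_le.trans hg)]
    simp only [coeff_map, map_neg, map_add, map_mul, map_pow, map_ofNat]
  have key := sum_mul_neg_add_add_sum_norm_neg_trace h2 hchar H
  rw [hsumF, hsumK, two_nsmul] at key
  have h2F : (2 : F) ≠ 0 := Ring.two_ne_zero hchar
  apply mul_left_cancel₀ h2F
  linear_combination -key

end QuadraticExtension

end FiniteField

theorem double_sum_eq_det_general (p : ℕ) [Fact p.Prime] (hp : 5 ≤ p)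
    (α₁ α₂ α₃ : ZMod p)
    (f : Polynomial (ZMod p))
    (hf : f = X * (X - 1) * (X - C α₁) * (X - C α₂) * (X - C α₃))
    (c : ℕ → ZMod p) (hc : ∀ k, c k = (f ^ ((p - 1) / 2)).coeff k) :
    ∑ z : ZMod p × ZMod p,
      (z.1 * (1 + z.2 + z.1) *
        ((α₁ ^ 2 + α₁ * z.2 + z.1) * (α₂ ^ 2 + α₂ * z.2 + z.1) *
          (α₃ ^ 2 + α₃ * z.2 + z.1))) ^ ((p - 1) / 2) =
      c (p - 1) * c (2 * p - 2) - c (p - 2) * c (2 * p - 1) := by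
  obtain ⟨m, rfl⟩ := (Fact.out : p.Prime).odd_of_ne_two (by omega)
  have : Fintype (GaloisField (2 * m + 1) 2) := Fintype.ofFinite _
  have hdeg : f.natDegree ≤ 5 := by rw [hf]; compute_degree
  simp only [hc, show (2 * m + 1 - 1) / 2 = m by omega]
  rw [show 2 * m + 1 - 1 = 2 * m by omega, show 2 * (2 * m + 1) - 2 = 4 * m by omega,
    show 2 * m + 1 - 2 = 2 * m - 1 by omega, show 2 * (2 * m + 1) - 1 = 4 * m + 1 by omega]
  refine FiniteField.sum_eq_coeff_mul_coeff_sub_coeff_mul_coeff (K := GaloisField (2 * m + 1) 2)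
    (ZMod.card _) (GaloisField.finrank _ two_ne_zero) (f ^ m)
    (natDegree_pow_le.trans (by rw [mul_comm]; gcongr)) _ fun w s t hs ht => ?_
  simp only [map_pow, map_mul, map_add, map_one, Polynomial.map_pow, eval_pow, hf,
    Polynomial.map_mul, Polynomial.map_sub, map_X, map_C, Polynomial.map_one, eval_mul, eval_sub,
    eval_X, eval_C, eval_one, hs, ht, ← mul_pow]
  ring

/-- For the quintic `f = X(X-1)(X-α₁)(X-α₂)(X-α₃)` over `𝔽_p`, one has
`∑_{(a,b)} (a(1+b+a)∏ᵢ(αᵢ² + αᵢb + a))^((p-1)/2) = c_{p-1} c_{2p-2} - c_{p-2} c_{2p-1}`. -/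
theorem double_sum_eq_det (p : ℕ) [Fact p.Prime] (hp : 5 ≤ p)
    (α₁ α₂ α₃ : ZMod p)
    (h12 : α₁ ≠ α₂) (h13 : α₁ ≠ α₃) (h23 : α₂ ≠ α₃)
    (h10 : α₁ ≠ 0) (h20 : α₂ ≠ 0) (h30 : α₃ ≠ 0)
    (h11 : α₁ ≠ 1) (h21 : α₂ ≠ 1) (h31 : α₃ ≠ 1)
    (f : Polynomial (ZMod p))
    (hf : f = X * (X - 1) * (X - C α₁) * (X - C α₂) * (X - C α₃))
    (c : ℕ → ZMod p) (hc : ∀ k, c k = (f ^ ((p - 1) / 2)).coeff k) :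
    ∑ z : ZMod p × ZMod p,
      (z.1 * (1 + z.2 + z.1) *
        ((α₁ ^ 2 + α₁ * z.2 + z.1) * (α₂ ^ 2 + α₂ * z.2 + z.1) *
          (α₃ ^ 2 + α₃ * z.2 + z.1))) ^ ((p - 1) / 2) =
      c (p - 1) * c (2 * p - 2) - c (p - 2) * c (2 * p - 1) :=
  double_sum_eq_det_general p hp α₁ α₂ α₃ f hf c hc
end
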